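/- Let H be a finitely generated group and G a homomorphic image of H with d(G) = d(H). If G has generation gap zero and the augmentation ideal ΔG is a Swan module, then H has generation gap zero, ΔH is a Swan module, and every ΔG-prime is a ΔH-prime. -/

import Mathlib

noncomputable section

/-- The integral group ring ℤG. -/
abbrev ZG (G : Type*) [Group G] : Type _ := MonoidAlgebra ℤ G

/-- `dMod R M` is the minimal number of generators of `M` as an `R`-module. -/
def dMod (R M : Type*) [Ring R] [AddCommGroup M] [Module R M] : ℕ :=
  sInf {n | ∃ s : Finset M, s.card = n ∧ Submodule.span R (s : Set M) = ⊤}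

/-- The submodule `pM` of `M`. -/
def pMul (R M : Type*) [Ring R] [AddCommGroup M] [Module R M] (p : ℕ) : Submodule R M :=
  Submodule.span R {x : M | ∃ m : M, x = p • m}

/-- `dModP R M p` is the minimal number of generators of `M/pM` as an `R`-module. -/
def dModP (R M : Type*) [Ring R] [AddCommGroup M] [Module R M] (p : ℕ) : ℕ :=
  dMod R (M ⧸ pMul R M p)

/-- Minimal number of generators of the group `G`. -/
def dGrp (G : Type*) [Group G] : ℕ :=
  sInf {n | ∃ s : Finset G, s.card = n ∧ Subgroup.closure (s : Set G) = ⊤}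

/-- The augmentation ideal ΔG of ℤG: the kernel of the augmentation map ℤG → ℤ. -/
def aug (G : Type*) [Group G] : Ideal (ZG G) :=
  RingHom.ker ((MonoidAlgebra.lift ℤ ℤ G (1 : G →* ℤ)) : ZG G →ₐ[ℤ] ℤ).toRingHom

/-- `d_G(ΔG)`, minimal number of ℤG-module generators of the augmentation ideal. -/
def dAug (G : Type*) [Group G] : ℕ := dMod (ZG G) (aug G)

/-- `d_G(ΔG/pΔG)`. -/
def dAugP (G : Type*) [Group G] (p : ℕ) : ℕ := dModP (ZG G) (aug G) p

/-- The generation gap `gap(G) = d(G) - d_G(ΔG)` (as an integer). -/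
def gapZ (G : Type*) [Group G] : ℤ := (dGrp G : ℤ) - (dAug G : ℤ)

/-- `p` is a ΔG-prime: a prime with `d_G(ΔG) = d_G(ΔG/pΔG)`. -/
def IsAugPrime (G : Type*) [Group G] (p : ℕ) : Prop := p.Prime ∧ dAug G = dAugP G p

/-- ΔG is a Swan module: some prime is a ΔG-prime. -/
def AugSwan (G : Type*) [Group G] : Prop := ∃ p, IsAugPrime G p

/-!
For finitely generated `H`, the elements `h - 1` with `h` in a generating set generate `ΔH`,
so `d_H(ΔH/pΔH) ≤ d_H(ΔH) ≤ d(H)`; a surjection `H → G` induces a surjection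
`ΔH/pΔH → ΔG/pΔG`, so `d_G(ΔG/pΔG) ≤ d_H(ΔH/pΔH)`. For a `ΔG`-prime `p` the chain
`d(H) = d(G) = d_G(ΔG) = d_G(ΔG/pΔG) ≤ d_H(ΔH/pΔH) ≤ d_H(ΔH) ≤ d(H)` closes up.
-/

open MonoidAlgebra

section GeneratorCount

variable {R M : Type*} [Ring R] [AddCommGroup M] [Module R M]

lemma dMod_le_card {s : Finset M} (hs : Submodule.span R (s : Set M) = ⊤) :
    dMod R M ≤ s.card :=
  Nat.sInf_le ⟨s, rfl, hs⟩

lemma exists_card_eq_dMod [Module.Finite R M] :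
    ∃ s : Finset M, s.card = dMod R M ∧ Submodule.span R (s : Set M) = ⊤ :=
  have ⟨s, hs⟩ := Module.Finite.fg_top (R := R) (M := M)
  Nat.sInf_mem (s := {n | ∃ s : Finset M, s.card = n ∧ Submodule.span R (s : Set M) = ⊤})
    ⟨s.card, s, rfl, hs⟩

lemma dMod_le_card_of_span_eq {N : Submodule R M} {s : Finset M}
    (hs : Submodule.span R (s : Set M) = N) : dMod R N ≤ s.card := by
  classical
  subst hs
  let t := s.preimage ((↑) : Submodule.span R (s : Set M) → M) Subtype.val_injective.injOn
  calc dMod R (Submodule.span R (s : Set M)) ≤ t.card :=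
        dMod_le_card (by rw [Finset.coe_preimage]; exact Submodule.span_span_coe_preimage)
    _ ≤ s.card := by
        rw [Finset.card_preimage]; exact Finset.card_filter_le _ _

lemma dMod_le_of_surjective {S N : Type*} [Ring S] [AddCommGroup N] [Module S N]
    {σ : R →+* S} [RingHomSurjective σ] [Module.Finite R M]
    (F : M →ₛₗ[σ] N) (hF : Function.Surjective F) : dMod S N ≤ dMod R M := by
  classical
  obtain ⟨s, hcard, hspan⟩ := exists_card_eq_dMod (R := R) (M := M)
  calc dMod S N ≤ (s.image F).card := dMod_le_card (by
        rw [Finset.coe_image, Submodule.span_image, hspan, Submodule.map_top,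
          LinearMap.range_eq_top.2 hF])
    _ ≤ dMod R M := hcard ▸ Finset.card_image_le

lemma pMul_le_comap {S N : Type*} [Ring S] [AddCommGroup N] [Module S N] {σ : R →+* S}
    (F : M →ₛₗ[σ] N) (p : ℕ) : pMul R M p ≤ (pMul S N p).comap F := by
  rw [pMul, Submodule.span_le]
  rintro _ ⟨m, rfl⟩
  exact Submodule.subset_span ⟨F m, map_nsmul F p m⟩

lemma dModP_le_dMod [Module.Finite R M] (p : ℕ) : dModP R M p ≤ dMod R M :=
  dMod_le_of_surjective (σ := RingHom.id R) _ (pMul R M p).mkQ_surjective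

lemma dModP_le_of_surjective {S N : Type*} [Ring S] [AddCommGroup N] [Module S N]
    {σ : R →+* S} [RingHomSurjective σ] [Module.Finite R M]
    (F : M →ₛₗ[σ] N) (hF : Function.Surjective F) (p : ℕ) : dModP S N p ≤ dModP R M p := by
  let Fbar := (pMul R M p).mapQ (pMul S N p) F (pMul_le_comap F p)
  have hFbar : Function.Surjective (Fbar ∘ (pMul R M p).mkQ) := by
    rw [← LinearMap.coe_comp, Submodule.mapQ_mkQ, LinearMap.coe_comp]
    exact (pMul S N p).mkQ_surjective.comp hF
  exact dMod_le_of_surjective Fbar hFbar.of_comp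

end GeneratorCount

section Augmentation

abbrev augHom (G : Type*) [Group G] : ZG G →ₐ[ℤ] ℤ := lift ℤ ℤ G 1

variable {G : Type*} [Group G]

lemma mem_aug_iff {x : ZG G} : x ∈ aug G ↔ augHom G x = 0 := Iff.rfl

lemma of_sub_one_mem_aug (g : G) : of ℤ G g - 1 ∈ aug G := by
  simp [mem_aug_iff]

lemma sub_augHom_mem_span (x : ZG G) :
    x - (augHom G x : ZG G) ∈ Submodule.span (ZG G) (Set.range fun g => of ℤ G g - 1) := by
  induction x using MonoidAlgebra.induction_linear with
  | zero => simp
  | add x y hx hy =>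
    convert add_mem hx hy using 1
    push_cast [map_add]
    abel
  | single g c =>
    have hg : of ℤ G g - 1 ∈ Submodule.span (ZG G) (Set.range fun g => of ℤ G g - 1) :=
      Submodule.subset_span ⟨g, rfl⟩
    convert zsmul_mem hg c using 1
    simp [smul_sub]

def subOneSubgroup (I : Submodule (ZG G) (ZG G)) : Subgroup G where
  carrier := {g | of ℤ G g - 1 ∈ I}
  one_mem' := by
    rw [Set.mem_ofPred_eq, map_one, sub_self]
    exact I.zero_mem
  mul_mem' {x y} hx hy := by
    have h : of ℤ G (x * y) - 1 = of ℤ G x • (of ℤ G y - 1) + (of ℤ G x - 1) := by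
      rw [map_mul, smul_eq_mul, mul_sub, mul_one]; abel
    simpa only [Set.mem_ofPred_eq, h] using add_mem (I.smul_mem _ hy) hx
  inv_mem' {x} hx := by
    have h : of ℤ G x⁻¹ - 1 = -(of ℤ G x⁻¹ • (of ℤ G x - 1)) := by
      rw [smul_eq_mul, mul_sub, ← map_mul, inv_mul_cancel, map_one, mul_one, neg_sub]
    simpa only [Set.mem_ofPred_eq, h] using neg_mem (I.smul_mem _ hx)

lemma span_of_sub_one_eq_aug {s : Set G} (hs : Subgroup.closure s = ⊤) :
    Submodule.span (ZG G) ((fun g => of ℤ G g - 1) '' s) = aug G := by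
  set I := Submodule.span (ZG G) ((fun g => of ℤ G g - 1) '' s)
  refine le_antisymm (Submodule.span_le.2 ?_) fun x hx => ?_
  · rintro _ ⟨g, -, rfl⟩
    exact of_sub_one_mem_aug g
  have hI : ∀ g, of ℤ G g - 1 ∈ I := fun g =>
    (Subgroup.closure_le (subOneSubgroup I)).2 (fun g hg => Submodule.subset_span ⟨g, hg, rfl⟩)
      (hs ▸ Subgroup.mem_top g)
  have hx' := sub_augHom_mem_span x
  rw [mem_aug_iff.1 hx, Int.cast_zero, sub_zero] at hx'
  exact Submodule.span_le.2 (Set.range_subset_iff.2 hI) hx'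

lemma dAug_le_card {s : Finset G} (hs : Subgroup.closure (s : Set G) = ⊤) :
    dAug G ≤ s.card := by
  classical
  have h := span_of_sub_one_eq_aug hs
  rw [← Finset.coe_image] at h
  exact (dMod_le_card_of_span_eq h).trans Finset.card_image_le

lemma exists_card_eq_dGrp [Group.FG G] :
    ∃ s : Finset G, s.card = dGrp G ∧ Subgroup.closure (s : Set G) = ⊤ :=
  have ⟨s, hs⟩ := Group.FG.out (G := G)
  Nat.sInf_mem (s := {n | ∃ s : Finset G, s.card = n ∧ Subgroup.closure (s : Set G) = ⊤})
    ⟨s.card, s, rfl, hs⟩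

lemma dAug_le_dGrp [Group.FG G] : dAug G ≤ dGrp G :=
  have ⟨_, hcard, hs⟩ := exists_card_eq_dGrp (G := G)
  hcard ▸ dAug_le_card hs

instance [Group.FG G] : Module.Finite (ZG G) (aug G) := by
  classical
  obtain ⟨s, hs⟩ := Group.FG.out (G := G)
  exact Module.Finite.iff_fg.2
    ⟨s.image _, by rw [Finset.coe_image]; exact span_of_sub_one_eq_aug hs⟩

end Augmentation

lemma MonoidAlgebra.mapDomain_surjective {R M N : Type*} [Semiring R] {f : M → N}
    (hf : Function.Surjective f) : Function.Surjective (mapDomain (R := R) f) := by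
  intro y
  obtain ⟨c, hc⟩ := Finsupp.mapDomain_surjective hf y.coeff
  exact ⟨ofCoeff c, by ext; simp [mapDomain, hc]⟩

section Functoriality

variable {H G : Type*} [Group H] [Group G] (f : H →* G)

lemma augHom_mapDomain (x : ZG H) : augHom G (mapDomain f x) = augHom H x := by
  have h : (augHom G).comp (mapDomainAlgHom ℤ ℤ f) = augHom H :=
    algHom_ext (by simp) (Subsingleton.elim _ _)
  exact DFunLike.congr_fun h x

def augMap : aug H →ₛₗ[mapDomainRingHom ℤ f] aug G :=
  (mapDomainRingHom ℤ f).toSemilinearMap.restrict fun x hx => by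
    rw [mem_aug_iff] at hx ⊢
    exact (augHom_mapDomain f x).trans hx

variable {f}

lemma augMap_surjective (hf : Function.Surjective f) : Function.Surjective (augMap f) := by
  rintro ⟨y, hy⟩
  obtain ⟨x, rfl⟩ := mapDomain_surjective hf y
  exact ⟨⟨x, (augHom_mapDomain f x).symm.trans hy⟩, rfl⟩

lemma dAugP_le_of_surjective [Group.FG H] (hf : Function.Surjective f) (p : ℕ) :
    dAugP G p ≤ dAugP H p :=
  have : RingHomSurjective (mapDomainRingHom ℤ f) := ⟨mapDomain_surjective hf⟩
  dModP_le_of_surjective (augMap f) (augMap_surjective hf) p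

end Functoriality

/-- if `H` is finitely generated, `G` is a homomorphic image of `H` with
`d(G) = d(H)`, `gap(G) = 0` and `ΔG` is a Swan module, then `gap(H) = 0`, `ΔH` is a Swan
module and every `ΔG`-prime is a `ΔH`-prime. -/
theorem stmt3 (H : Type) [Group H] (hH : Group.FG H)
    (G : Type) [Group G] (f : H →* G) (hf : Function.Surjective f)
    (hd : dGrp G = dGrp H)
    (hgap : gapZ G = 0) (hswan : AugSwan G) :
    gapZ H = 0 ∧ AugSwan H ∧ ∀ p : ℕ, IsAugPrime G p → IsAugPrime H p := by
  have hG : dGrp G = dAug G := by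
    rw [gapZ, sub_eq_zero] at hgap
    exact_mod_cast hgap
  have key : ∀ p, IsAugPrime G p → dAug H = dGrp H ∧ IsAugPrime H p := by
    rintro p ⟨hp, hpG⟩
    have h₁ := dAugP_le_of_surjective hf p
    have h₂ : dAugP H p ≤ dAug H := dModP_le_dMod p
    have h₃ : dAug H ≤ dGrp H := dAug_le_dGrp
    exact ⟨by omega, hp, by omega⟩
  obtain ⟨p, hp⟩ := hswan
  refine ⟨?_, ⟨p, (key p hp).2⟩, fun q hq => (key q hq).2⟩
  rw [gapZ, (key p hp).1, sub_self]
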